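/- Let M_{C₁} = (U₁, I₁) and M_{C₂} = (U₂, I₂) be rough matroids based on coverings C₁ of U₁ and C₂ of U₂, with U₁ ∩ U₂ = ∅. Then their direct sum (U₁ ∪ U₂, I), where I = {I' ∪ I'' : I' ∈ I₁, I'' ∈ I₂}, is a rough matroid based on the covering C₁ ∪ C₂ of U₁ ∪ U₂. -/

import Mathlib

variable {α : Type*}

/-- `C` is a covering of `U`: every member is nonempty and their union is `U`. -/
def IsCovering (U : Set α) (C : Set (Set α)) : Prop :=
  (∀ K ∈ C, K.Nonempty) ∧ ⋃₀ C = U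

/-- The neighborhood of `x`: intersection of all members of `C` containing `x`. -/
def nbhd (C : Set (Set α)) (x : α) : Set α :=
  ⋂₀ {K | K ∈ C ∧ x ∈ K}

/-- `X` is definable w.r.t. `C` if it is the union of the neighborhoods of its points. -/
def Definable (C : Set (Set α)) (X : Set α) : Prop :=
  X = ⋃ x ∈ X, nbhd C x

/-- The family of all definable subsets of `U` w.r.t. `C`. -/
def DefinableSets (U : Set α) (C : Set (Set α)) : Set (Set α) :=
  {X | X ⊆ U ∧ Definable C X}

/-- Covering-based lower approximation. -/
def lowerApprox (U : Set α) (C : Set (Set α)) (X : Set α) : Set α :=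
  {x ∈ U | nbhd C x ⊆ X}

/-- Covering-based upper approximation. -/
def upperApprox (U : Set α) (C : Set (Set α)) (X : Set α) : Set α :=
  {x ∈ U | (nbhd C x ∩ X).Nonempty}

/-- Rough matroid based on a covering `C` of `U`. -/
def RoughMatroid (U : Set α) (C : Set (Set α)) (I : Set (Set α)) : Prop :=
  I ⊆ DefinableSets U C ∧
  ∅ ∈ I ∧
  (∀ I₀ ∈ I, ∀ I', I' ⊆ I₀ → I' ∈ DefinableSets U C → I' ∈ I) ∧
  (∀ I₁ ∈ I, ∀ I₂ ∈ I, I₁.ncard < I₂.ncard →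
    ∃ I₀ ∈ I, I₁ ⊂ I₀ ∧ I₀ ⊆ I₁ ∪ I₂)

/-- Matroid independence axioms (I1)-(I3). -/
def MatroidInd (I : Set (Set α)) : Prop :=
  ∅ ∈ I ∧
  (∀ X ∈ I, ∀ Y, Y ⊆ X → Y ∈ I) ∧
  (∀ I₁ ∈ I, ∀ I₂ ∈ I, I₁.ncard < I₂.ncard →
    ∃ e ∈ I₂ \ I₁, insert e I₁ ∈ I)

/-!
Because the coverings live on the disjoint sets `U₁` and `U₂`, the neighbourhood of a point for
`C₁ ∪ C₂` is its neighbourhood on its own side, so a subset of `U₁ ∪ U₂` is definable for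
`C₁ ∪ C₂` exactly when its traces on `U₁` and `U₂` are. Axioms (CI1) and (CI2) then hold
componentwise, writing a direct sum as the family `I₁ ⊻ I₂` of unions. For (CI3), cardinalities
add over the disjoint sides, so a gap `|A ∪ B| < |A' ∪ B'|` is a gap on one side, and augmenting
there leaves the other side untouched.
-/

open scoped SetFamily

section Covering

variable {U : Set α} {C : Set (Set α)}

lemma IsCovering.subset_of_mem (hC : IsCovering U C) {K : Set α} (hK : K ∈ C) : K ⊆ U :=
  hC.2 ▸ Set.subset_sUnion_of_mem hK

lemma mem_nbhd_self (C : Set (Set α)) (x : α) : x ∈ nbhd C x :=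
  fun _ hK => hK.2

lemma IsCovering.nbhd_subset (hC : IsCovering U C) {x : α} (hx : x ∈ U) : nbhd C x ⊆ U := by
  obtain ⟨K, hK, hxK⟩ := hC.2 ▸ hx
  exact (Set.sInter_subset_of_mem (show K ∈ {K | K ∈ C ∧ x ∈ K} from ⟨hK, hxK⟩)).trans (hC.subset_of_mem hK)

lemma definable_iff {X : Set α} : Definable C X ↔ ∀ x ∈ X, nbhd C x ⊆ X := by
  refine ⟨fun h x hx => h ▸ Set.subset_biUnion_of_mem hx, fun h => ?_⟩
  exact (Set.iUnion₂_subset h).antisymm' fun x hx => Set.mem_biUnion hx (mem_nbhd_self C x)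

end Covering

lemma nbhd_union_of_forall_notMem {C₁ C₂ : Set (Set α)} {x : α} (h : ∀ K ∈ C₂, x ∉ K) :
    nbhd (C₁ ∪ C₂) x = nbhd C₁ x := by
  have : {K | K ∈ C₁ ∪ C₂ ∧ x ∈ K} = {K | K ∈ C₁ ∧ x ∈ K} := by
    ext K
    exact ⟨fun ⟨hK, hxK⟩ => ⟨hK.resolve_right fun hK₂ => h K hK₂ hxK, hxK⟩,
      fun ⟨hK, hxK⟩ => ⟨Or.inl hK, hxK⟩⟩
  rw [nbhd, this, nbhd]

section DisjointCoverings

variable {U₁ U₂ : Set α} {C₁ C₂ : Set (Set α)}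

lemma nbhd_union_left (hdisj : Disjoint U₁ U₂) (hC₂ : IsCovering U₂ C₂) {x : α} (hx : x ∈ U₁) :
    nbhd (C₁ ∪ C₂) x = nbhd C₁ x :=
  nbhd_union_of_forall_notMem fun _ hK hxK =>
    Set.disjoint_left.mp hdisj hx (hC₂.subset_of_mem hK hxK)

lemma nbhd_union_right (hdisj : Disjoint U₁ U₂) (hC₁ : IsCovering U₁ C₁) {x : α} (hx : x ∈ U₂) :
    nbhd (C₁ ∪ C₂) x = nbhd C₂ x :=
  Set.union_comm C₁ C₂ ▸ nbhd_union_left hdisj.symm hC₁ hx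

lemma union_mem_definableSets_union (hdisj : Disjoint U₁ U₂) (hC₁ : IsCovering U₁ C₁)
    (hC₂ : IsCovering U₂ C₂) {X Y : Set α} (hX : X ∈ DefinableSets U₁ C₁)
    (hY : Y ∈ DefinableSets U₂ C₂) : X ∪ Y ∈ DefinableSets (U₁ ∪ U₂) (C₁ ∪ C₂) := by
  refine ⟨Set.union_subset_union hX.1 hY.1, definable_iff.2 ?_⟩
  rintro x (hx | hx)
  · rw [nbhd_union_left hdisj hC₂ (hX.1 hx)]
    exact (definable_iff.1 hX.2 x hx).trans Set.subset_union_left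
  · rw [nbhd_union_right hdisj hC₁ (hY.1 hx)]
    exact (definable_iff.1 hY.2 x hx).trans Set.subset_union_right

lemma inter_left_mem_definableSets (hdisj : Disjoint U₁ U₂) (hC₁ : IsCovering U₁ C₁)
    (hC₂ : IsCovering U₂ C₂) {X : Set α} (hX : X ∈ DefinableSets (U₁ ∪ U₂) (C₁ ∪ C₂)) :
    X ∩ U₁ ∈ DefinableSets U₁ C₁ := by
  refine ⟨Set.inter_subset_right, definable_iff.2 fun x hx => ?_⟩
  have hnbhd : nbhd (C₁ ∪ C₂) x = nbhd C₁ x := nbhd_union_left hdisj hC₂ hx.2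
  exact Set.subset_inter (hnbhd ▸ definable_iff.1 hX.2 x hx.1) (hC₁.nbhd_subset hx.2)

lemma inter_right_mem_definableSets (hdisj : Disjoint U₁ U₂) (hC₁ : IsCovering U₁ C₁)
    (hC₂ : IsCovering U₂ C₂) {X : Set α} (hX : X ∈ DefinableSets (U₁ ∪ U₂) (C₁ ∪ C₂)) :
    X ∩ U₂ ∈ DefinableSets U₂ C₂ := by
  rw [Set.union_comm U₁, Set.union_comm C₁] at hX
  exact inter_left_mem_definableSets hdisj.symm hC₂ hC₁ hX

end DisjointCoverings

lemma union_ssubset_union_of_ssubset_left {s s' t : Set α} (h : s ⊂ s') (hd : Disjoint s' t) :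
    s ∪ t ⊂ s' ∪ t :=
  sup_lt_sup_of_lt_of_inf_le_inf h (hd.eq_bot ▸ bot_le)

lemma union_ssubset_union_of_ssubset_right {s t t' : Set α} (h : t ⊂ t') (hd : Disjoint s t') :
    s ∪ t ⊂ s ∪ t' := by
  simpa only [Set.union_comm s] using union_ssubset_union_of_ssubset_left h hd.symm

/-- Axiom (CI3) of a rough matroid. -/
def HasAugmentation (I : Set (Set α)) : Prop :=
  ∀ I₁ ∈ I, ∀ I₂ ∈ I, I₁.ncard < I₂.ncard → ∃ I₀ ∈ I, I₁ ⊂ I₀ ∧ I₀ ⊆ I₁ ∪ I₂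

theorem HasAugmentation.sups {U₁ U₂ : Set α} {I₁ I₂ : Set (Set α)} (hdisj : Disjoint U₁ U₂)
    (hU₁ : U₁.Finite) (hU₂ : U₂.Finite) (hI₁ : ∀ A ∈ I₁, A ⊆ U₁) (hI₂ : ∀ B ∈ I₂, B ⊆ U₂)
    (h₁ : HasAugmentation I₁) (h₂ : HasAugmentation I₂) : HasAugmentation (I₁ ⊻ I₂) := by
  have hdisjAB : ∀ {A B}, A ∈ I₁ → B ∈ I₂ → Disjoint A B :=
    fun hA hB => hdisj.mono (hI₁ _ hA) (hI₂ _ hB)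
  have hcard : ∀ {A B}, A ∈ I₁ → B ∈ I₂ → (A ∪ B).ncard = A.ncard + B.ncard :=
    fun hA hB => Set.ncard_union_eq (hdisjAB hA hB) (hU₁.subset (hI₁ _ hA)) (hU₂.subset (hI₂ _ hB))
  rintro _ ⟨A, hA, B, hB, rfl⟩ _ ⟨A', hA', B', hB', rfl⟩ hlt
  change (A ∪ B).ncard < (A' ∪ B').ncard at hlt
  rw [hcard hA hB, hcard hA' hB'] at hlt
  rcases lt_or_ge A.ncard A'.ncard with hA_lt | hA_ge
  · obtain ⟨A₀, hA₀, hAA₀, hA₀_sub⟩ := h₁ A hA A' hA' hA_lt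
    refine ⟨A₀ ∪ B, Set.sup_mem_sups hA₀ hB,
      union_ssubset_union_of_ssubset_left hAA₀ (hdisjAB hA₀ hB), ?_⟩
    exact Set.union_subset
      (hA₀_sub.trans (Set.union_subset_union Set.subset_union_left Set.subset_union_left))
      (Set.subset_union_right.trans Set.subset_union_left)
  · obtain ⟨B₀, hB₀, hBB₀, hB₀_sub⟩ := h₂ B hB B' hB' (by omega)
    refine ⟨A ∪ B₀, Set.sup_mem_sups hA hB₀,
      union_ssubset_union_of_ssubset_right hBB₀ (hdisjAB hA hB₀), ?_⟩
    exact Set.union_subset (Set.subset_union_left.trans Set.subset_union_left)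
      (hB₀_sub.trans (Set.union_subset_union Set.subset_union_right Set.subset_union_right))

lemma RoughMatroid.subset_of_mem {U : Set α} {C I : Set (Set α)} (hM : RoughMatroid U C I)
    {X : Set α} (hX : X ∈ I) : X ⊆ U :=
  (hM.1 hX).1

section DirectSum

variable {U₁ U₂ : Set α} {C₁ C₂ I₁ I₂ : Set (Set α)}

lemma RoughMatroid.sups_subset_definableSets (hdisj : Disjoint U₁ U₂) (hC₁ : IsCovering U₁ C₁)
    (hC₂ : IsCovering U₂ C₂) (hM₁ : RoughMatroid U₁ C₁ I₁) (hM₂ : RoughMatroid U₂ C₂ I₂) :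
    I₁ ⊻ I₂ ⊆ DefinableSets (U₁ ∪ U₂) (C₁ ∪ C₂) :=
  Set.sups_subset_iff.2 fun _ hA _ hB =>
    union_mem_definableSets_union hdisj hC₁ hC₂ (hM₁.1 hA) (hM₂.1 hB)

lemma RoughMatroid.sups_hereditary (hdisj : Disjoint U₁ U₂) (hC₁ : IsCovering U₁ C₁)
    (hC₂ : IsCovering U₂ C₂) (hM₁ : RoughMatroid U₁ C₁ I₁) (hM₂ : RoughMatroid U₂ C₂ I₂) :
    ∀ I₀ ∈ I₁ ⊻ I₂, ∀ I', I' ⊆ I₀ → I' ∈ DefinableSets (U₁ ∪ U₂) (C₁ ∪ C₂) → I' ∈ I₁ ⊻ I₂ := by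
  rintro _ ⟨A, hA, B, hB, rfl⟩ X hXAB hX
  have hXA : X ∩ U₁ ⊆ A := fun x ⟨hxX, hxU₁⟩ =>
    (hXAB hxX).resolve_right fun hxB => Set.disjoint_left.mp hdisj hxU₁ (hM₂.subset_of_mem hB hxB)
  have hXB : X ∩ U₂ ⊆ B := fun x ⟨hxX, hxU₂⟩ =>
    (hXAB hxX).resolve_left fun hxA => Set.disjoint_left.mp hdisj (hM₁.subset_of_mem hA hxA) hxU₂
  refine ⟨X ∩ U₁, hM₁.2.2.1 A hA _ hXA (inter_left_mem_definableSets hdisj hC₁ hC₂ hX),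
    X ∩ U₂, hM₂.2.2.1 B hB _ hXB (inter_right_mem_definableSets hdisj hC₁ hC₂ hX), ?_⟩
  exact (Set.inter_union_distrib_left X U₁ U₂).symm.trans (Set.inter_eq_left.2 hX.1)

end DirectSum

theorem directSum_roughMatroid_general {U₁ U₂ : Set α} {C₁ C₂ : Set (Set α)}
    {I₁ I₂ : Set (Set α)}
    (hU₁ : U₁.Finite) (hU₂ : U₂.Finite)
    (hdisj : Disjoint U₁ U₂)
    (hC₁ : IsCovering U₁ C₁) (hC₂ : IsCovering U₂ C₂)
    (hM₁ : RoughMatroid U₁ C₁ I₁) (hM₂ : RoughMatroid U₂ C₂ I₂) :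
    RoughMatroid (U₁ ∪ U₂) (C₁ ∪ C₂)
      {X | ∃ I' ∈ I₁, ∃ I'' ∈ I₂, X = I' ∪ I''} := by
  have hsups : {X | ∃ I' ∈ I₁, ∃ I'' ∈ I₂, X = I' ∪ I''} = I₁ ⊻ I₂ := by
    ext X
    simp [eq_comm (a := X)]
  rw [hsups]
  refine ⟨hM₁.sups_subset_definableSets hdisj hC₁ hC₂ hM₂, ?_,
    hM₁.sups_hereditary hdisj hC₁ hC₂ hM₂, ?_⟩
  · simpa using Set.sup_mem_sups hM₁.2.1 hM₂.2.1
  · exact HasAugmentation.sups hdisj hU₁ hU₂ (fun _ => hM₁.subset_of_mem)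
      (fun _ => hM₂.subset_of_mem) hM₁.2.2.2 hM₂.2.2.2

theorem directSum_roughMatroid {U₁ U₂ : Set α} {C₁ C₂ : Set (Set α)}
    {I₁ I₂ : Set (Set α)}
    (hU₁ : U₁.Finite) (hU₂ : U₂.Finite) (hne₁ : U₁.Nonempty) (hne₂ : U₂.Nonempty)
    (hdisj : Disjoint U₁ U₂)
    (hC₁ : IsCovering U₁ C₁) (hC₂ : IsCovering U₂ C₂)
    (hM₁ : RoughMatroid U₁ C₁ I₁) (hM₂ : RoughMatroid U₂ C₂ I₂) :
    RoughMatroid (U₁ ∪ U₂) (C₁ ∪ C₂)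
      {X | ∃ I' ∈ I₁, ∃ I'' ∈ I₂, X = I' ∪ I''} :=
  directSum_roughMatroid_general hU₁ hU₂ hdisj hC₁ hC₂ hM₁ hM₂
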